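/- arXiv:2404.10278 — 4 statements merged into one kernel-verified Lean document; each statement's English description precedes it below -/
import Mathlib

section
/- Let q ≥ 1 be an integer, a an integer coprime to q, and (α_m)_{1≤m≤X}, (β_n)_{1≤n≤Y} complex sequences with |α_m| ≤ 1 and |β_n| ≤ 1, where X, Y ≤ q. Then |∑_{m=1}^{X} ∑_{n=1}^{Y} α_m β_n e(a m n / q)| ≤ √(q X Y). -/
open Real Finset

/-- `e(t) = exp(2πit)`. -/
noncomputable def eR (t : ℝ) : ℂ := Complex.exp (2 * Real.pi * Complex.I * t)

lemma eR_add (s t : ℝ) : eR (s + t) = eR s * eR t := by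
  rw [eR, eR, eR, ← Complex.exp_add]
  congr 1
  push_cast
  ring

lemma eR_conj (t : ℝ) : (starRingEnd ℂ) (eR t) = eR (-t) := by
  rw [eR, eR, ← Complex.exp_conj]
  congr 1
  simp only [map_mul, Complex.conj_I, Complex.conj_ofReal, Complex.ofReal_neg, map_ofNat]
  ring

lemma sum_eR_eq (q : ℕ) (hq : 0 < q) (c : ℤ) :
    ∑ m ∈ Finset.Icc 1 q, eR ((c : ℝ) * m / q) = if (q : ℤ) ∣ c then (q : ℂ) else 0 := by
  have hq' : (q : ℂ) ≠ 0 := Nat.cast_ne_zero.mpr hq.ne'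
  set ζ : ℂ := Complex.exp (2 * Real.pi * Complex.I * ((c : ℂ) / q)) with hζ
  have hz : ∀ m : ℕ, eR ((c : ℝ) * m / q) = ζ ^ m := by
    intro m
    rw [eR, hζ, ← Complex.exp_nat_mul]
    congr 1
    push_cast
    field_simp
  have hzq : ζ ^ q = 1 := by
    rw [hζ, ← Complex.exp_nat_mul]
    have : (q : ℂ) * (2 * Real.pi * Complex.I * ((c : ℂ) / q)) = (c : ℂ) * (2 * Real.pi * Complex.I) := by
      field_simp
    rw [this, Complex.exp_int_mul_two_pi_mul_I]
  have h1 : ζ = 1 ↔ (q : ℤ) ∣ c := by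
    rw [hζ, Complex.exp_eq_one_iff]
    constructor
    · rintro ⟨n, hn⟩
      refine ⟨n, ?_⟩
      have hpi : (2 * (Real.pi : ℂ) * Complex.I) ≠ 0 := by
        simp [Real.pi_ne_zero, Complex.I_ne_zero]
      have : (c : ℂ) / q = n := by
        field_simp at hn ⊢
        have h2 : (c : ℂ) * (2 * Real.pi * Complex.I) = (n : ℂ) * (2 * Real.pi * Complex.I) * q := by
          rw [hn]; ring
        have := mul_right_cancel₀ hpi (by linear_combination h2 : (c : ℂ) * (2 * (Real.pi : ℂ) * Complex.I) = ((n : ℂ) * q) * (2 * (Real.pi : ℂ) * Complex.I))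
        rw [this]; ring
      have hc : (c : ℂ) = (n : ℂ) * q := by
        field_simp at this
        rw [this]; ring
      have hc' : (c : ℂ) = (q : ℂ) * n := by rw [hc]; ring
      exact_mod_cast hc'
    · rintro ⟨n, hn⟩
      refine ⟨n, ?_⟩
      rw [hn]
      push_cast
      field_simp
  by_cases hdvd : (q : ℤ) ∣ c
  · have : ζ = 1 := h1.mpr hdvd
    simp only [hdvd, if_true]
    rw [Finset.sum_congr rfl fun m _ => hz m, this]
    simp [Nat.card_Icc]
  · have hz1 : ζ ≠ 1 := fun h => hdvd (h1.mp h)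
    simp only [hdvd, if_false]
    rw [Finset.sum_congr rfl fun m _ => hz m]
    have hIcc : Finset.Icc 1 q = Finset.Ico 1 (q + 1) := by
      rw [Finset.Ico_add_one_right_eq_Icc]
    rw [hIcc, Finset.sum_Ico_eq_sum_range]
    simp only [Nat.add_sub_cancel]
    have : ∑ i ∈ Finset.range q, ζ ^ (1 + i) = ζ * ∑ i ∈ Finset.range q, ζ ^ i := by
      rw [Finset.mul_sum]
      exact Finset.sum_congr rfl fun i _ => by rw [pow_add, pow_one]
    rw [this, geom_sum_eq hz1, hzq]
    simp

theorem double_sum_vinogradov (q : ℕ) (hq : 1 ≤ q) (a : ℤ) (ha : IsCoprime a (q : ℤ))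
    (X Y : ℕ) (hX : X ≤ q) (hY : Y ≤ q) (α β : ℕ → ℂ)
    (hα : ∀ m, ‖α m‖ ≤ 1) (hβ : ∀ n, ‖β n‖ ≤ 1) :
    ‖∑ m ∈ Finset.Icc 1 X, ∑ n ∈ Finset.Icc 1 Y,
        α m * β n * eR ((a : ℝ) * m * n / q)‖ ≤ Real.sqrt (q * X * Y) := by
  have hq0 : 0 < q := hq
  set T : ℕ → ℂ := fun m => ∑ n ∈ Finset.Icc 1 Y, β n * eR ((a : ℝ) * m * n / q) with hT
  have hS : (∑ m ∈ Finset.Icc 1 X, ∑ n ∈ Finset.Icc 1 Y,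
      α m * β n * eR ((a : ℝ) * m * n / q)) = ∑ m ∈ Finset.Icc 1 X, α m * T m := by
    simp only [hT, Finset.mul_sum, mul_assoc]
  -- Step 1
  have h1 : ‖∑ m ∈ Finset.Icc 1 X, α m * T m‖ ≤
      ∑ m ∈ Finset.Icc 1 X, ‖T m‖ := by
    refine le_trans (norm_sum_le _ _) (Finset.sum_le_sum ?_)
    intro m _
    rw [norm_mul]
    calc ‖α m‖ * ‖T m‖ ≤ 1 * ‖T m‖ :=
          mul_le_mul_of_nonneg_right (hα m) (norm_nonneg _)
      _ = ‖T m‖ := one_mul _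
  -- Step 2 : Cauchy-Schwarz
  have h2 : (∑ m ∈ Finset.Icc 1 X, ‖T m‖) ^ 2 ≤
      (X : ℝ) * ∑ m ∈ Finset.Icc 1 X, ‖T m‖ ^ 2 := by
    have := Finset.sum_mul_sq_le_sq_mul_sq (Finset.Icc 1 X) (fun _ => (1 : ℝ))
      (fun m => ‖T m‖)
    simpa [Nat.card_Icc] using this
  -- Step 3
  have h3 : ∑ m ∈ Finset.Icc 1 X, ‖T m‖ ^ 2 ≤
      ∑ m ∈ Finset.Icc 1 q, ‖T m‖ ^ 2 := by
    refine Finset.sum_le_sum_of_subset_of_nonneg (Finset.Icc_subset_Icc_right hX) ?_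
    intros; positivity
  -- Step 4 : orthogonality
  have hTc : ∀ m : ℕ, T m * (starRingEnd ℂ) (T m) =
      ∑ n ∈ Finset.Icc 1 Y, ∑ n' ∈ Finset.Icc 1 Y,
        (β n * (starRingEnd ℂ) (β n')) * eR (((a * ((n : ℤ) - (n' : ℤ)) : ℤ) : ℝ) * m / q) := by
    intro m
    rw [hT]
    simp only [map_sum, map_mul]
    rw [Finset.sum_mul_sum]
    refine Finset.sum_congr rfl fun n _ => Finset.sum_congr rfl fun n' _ => ?_
    rw [eR_conj]
    have : (a : ℝ) * m * n / q + -((a : ℝ) * m * n' / q) =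
        ((a * ((n : ℤ) - (n' : ℤ)) : ℤ) : ℝ) * m / q := by
      push_cast
      field_simp
      ring
    rw [← this, eR_add]
    ring
  have hsum : ∑ m ∈ Finset.Icc 1 q, T m * (starRingEnd ℂ) (T m) =
      (q : ℂ) * ∑ n ∈ Finset.Icc 1 Y, β n * (starRingEnd ℂ) (β n) := by
    rw [Finset.sum_congr rfl fun m _ => hTc m]
    rw [Finset.sum_comm]
    have : ∀ n ∈ Finset.Icc 1 Y,
        (∑ m ∈ Finset.Icc 1 q, ∑ n' ∈ Finset.Icc 1 Y,
          (β n * (starRingEnd ℂ) (β n')) * eR (((a * ((n : ℤ) - (n' : ℤ)) : ℤ) : ℝ) * m / q)) =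
        (q : ℂ) * (β n * (starRingEnd ℂ) (β n)) := by
      intro n hn
      rw [Finset.sum_comm]
      have inner : ∀ n' ∈ Finset.Icc 1 Y,
          (∑ m ∈ Finset.Icc 1 q,
            (β n * (starRingEnd ℂ) (β n')) * eR (((a * ((n : ℤ) - (n' : ℤ)) : ℤ) : ℝ) * m / q)) =
          if n' = n then (q : ℂ) * (β n * (starRingEnd ℂ) (β n)) else 0 := by
        intro n' hn'
        rw [← Finset.mul_sum, sum_eR_eq q hq0]
        have hiff : ((q : ℤ) ∣ a * ((n : ℤ) - (n' : ℤ))) ↔ n' = n := by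
          constructor
          · intro hdvd
            have hqn : (q : ℤ) ∣ ((n : ℤ) - (n' : ℤ)) :=
              (ha.symm).dvd_of_dvd_mul_left hdvd
            have h1' : 1 ≤ n ∧ n ≤ Y := Finset.mem_Icc.mp hn
            have h2' : 1 ≤ n' ∧ n' ≤ Y := Finset.mem_Icc.mp hn'
            have habs : |(n : ℤ) - (n' : ℤ)| < q := by
              rw [abs_lt]
              omega
            have := Int.eq_zero_of_abs_lt_dvd hqn habs
            omega
          · rintro rfl
            simp
        by_cases hcase : n' = n
        · subst hcase
          rw [if_pos (hiff.mpr rfl), if_pos rfl]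
          ring
        · rw [if_neg (fun h => hcase (hiff.mp h)), if_neg hcase]
          ring
      rw [Finset.sum_congr rfl inner, Finset.sum_ite_eq' (Finset.Icc 1 Y) n]
      simp [hn]
    rw [Finset.sum_congr rfl this, ← Finset.mul_sum]
  have h4 : ∑ m ∈ Finset.Icc 1 q, ‖T m‖ ^ 2 =
      (q : ℝ) * ∑ n ∈ Finset.Icc 1 Y, Complex.normSq (β n) := by
    have : ((∑ m ∈ Finset.Icc 1 q, ‖T m‖ ^ 2 : ℝ) : ℂ) =
        (((q : ℝ) * ∑ n ∈ Finset.Icc 1 Y, Complex.normSq (β n) : ℝ) : ℂ) := by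
      push_cast
      calc (∑ m ∈ Finset.Icc 1 q, ((‖T m‖ : ℂ)) ^ 2)
          = ∑ m ∈ Finset.Icc 1 q, T m * (starRingEnd ℂ) (T m) := by
            refine Finset.sum_congr rfl fun m _ => ?_
            rw [Complex.mul_conj]
            rw [← Complex.sq_norm]
            push_cast
            ring
        _ = (q : ℂ) * ∑ n ∈ Finset.Icc 1 Y, β n * (starRingEnd ℂ) (β n) := hsum
        _ = (q : ℂ) * ∑ n ∈ Finset.Icc 1 Y, ((Complex.normSq (β n) : ℝ) : ℂ) := by
            congr 1
            exact Finset.sum_congr rfl fun n _ => Complex.mul_conj _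
    exact_mod_cast this
  have h5 : ∑ n ∈ Finset.Icc 1 Y, Complex.normSq (β n) ≤ (Y : ℝ) := by
    calc ∑ n ∈ Finset.Icc 1 Y, Complex.normSq (β n) ≤ ∑ n ∈ Finset.Icc 1 Y, 1 := by
          refine Finset.sum_le_sum fun n _ => ?_
          rw [← Complex.sq_norm]
          nlinarith [hβ n, norm_nonneg (β n)]
      _ = (Y : ℝ) := by simp [Nat.card_Icc]
  -- Conclusion
  rw [hS]
  have habs : ‖∑ m ∈ Finset.Icc 1 X, α m * T m‖ ^ 2 ≤ (q : ℝ) * X * Y := by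
    have hb : (∑ m ∈ Finset.Icc 1 X, ‖T m‖) ^ 2 ≤ (X : ℝ) * ((q : ℝ) * Y) := by
      refine h2.trans ?_
      have : ∑ m ∈ Finset.Icc 1 X, ‖T m‖ ^ 2 ≤ (q : ℝ) * Y := by
        calc ∑ m ∈ Finset.Icc 1 X, ‖T m‖ ^ 2
            ≤ ∑ m ∈ Finset.Icc 1 q, ‖T m‖ ^ 2 := h3
          _ = (q : ℝ) * ∑ n ∈ Finset.Icc 1 Y, Complex.normSq (β n) := h4
          _ ≤ (q : ℝ) * Y := by
              exact mul_le_mul_of_nonneg_left h5 (Nat.cast_nonneg q)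
      exact mul_le_mul_of_nonneg_left this (Nat.cast_nonneg X)
    nlinarith [h1, norm_nonneg (∑ m ∈ Finset.Icc 1 X, α m * T m),
      Finset.sum_nonneg (fun m (_ : m ∈ Finset.Icc 1 X) => norm_nonneg (T m))]
  exact Real.le_sqrt_of_sq_le habs
end

section
/- Let q ≥ 1 be an integer and a coprime to q. Let M, N ≥ 1 be real, and let (α_m), (β_n) be complex sequences supported on [M, 2M] and [N, 2N] respectively with |α_m|, |β_n| ≤ 1. Then the bilinear sum ∑_{M ≤ m ≤ 2M} ∑_{N ≤ n ≤ 2N} α_m β_n e(a m n / q) is, up to an absolute constant factor, at most (MN)^{1/2} q^{-1/2} (M + q)^{1/2} (N + q)^{1/2}. -/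
/-!
For sets `S`, `T` of integers with pairwise distinct residues mod `q`, Cauchy–Schwarz in `m`
followed by extending the `m`-sum to all residues mod `q` and Plancherel for the additive
characters of `ZMod q` (`n ↦ a n` is injective mod `q` because `a` is a unit) bound the block
sum by `√(q #S #T)`. Cutting `[M, 2M]` and `[N, 2N]` into about `M/q + 1` and `N/q + 1` runs of
at most `min(M, q)` and `min(N, q)` consecutive integers and adding up the block bounds gives the
theorem with `C = 3`.
-/

open Real Finset

open ComplexConjugate

namespace AddChar

variable {R ι κ : Type*} [CommRing R] [Fintype R] [DecidableEq R] {ψ : AddChar R ℂ}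

theorem sum_norm_sq_sum_mul_apply_mul (hψ : ψ.IsPrimitive) {T : Finset κ} {v : κ → R}
    (hv : Set.InjOn v T) (c : κ → ℂ) :
    ∑ x : R, ‖∑ n ∈ T, c n * ψ (x * v n)‖ ^ 2 = Fintype.card R * ∑ n ∈ T, ‖c n‖ ^ 2 := by
  classical
  have expand (x : R) : (‖∑ n ∈ T, c n * ψ (x * v n)‖ : ℂ) ^ 2 =
      ∑ n ∈ T, ∑ n' ∈ T, c n * conj (c n') * ψ (x * (v n - v n')) := by
    rw [← Complex.mul_conj', map_sum, sum_mul_sum]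
    refine sum_congr rfl fun n _ => sum_congr rfl fun n' _ => ?_
    rw [map_mul (starRingEnd ℂ), ← map_neg_eq_conj, mul_sub, sub_eq_add_neg, map_add_eq_mul,
      ← mul_neg]
    ring
  have orthogonality (n n' : κ) (hn : n ∈ T) (hn' : n' ∈ T) :
      ∑ x : R, c n * conj (c n') * ψ (x * (v n - v n')) =
        if n' = n then (Fintype.card R * ‖c n‖ ^ 2 : ℂ) else 0 := by
    simp only [← mul_sum, sum_mulShift _ hψ, sub_eq_zero]
    by_cases h : n' = n
    · simp [h, Complex.mul_conj', mul_comm]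
    · simp [h, hv.ne hn hn' (Ne.symm h)]
  apply Complex.ofReal_injective
  push_cast
  simp_rw [expand]
  rw [sum_comm, mul_sum]
  refine sum_congr rfl fun n hn => ?_
  rw [sum_comm, sum_congr rfl (orthogonality n · hn), sum_ite_eq' T n, if_pos hn]

theorem norm_sum_sum_mul_apply_mul_le (hψ : ψ.IsPrimitive) {S : Finset ι} {T : Finset κ}
    {u : ι → R} {v : κ → R} (hu : Set.InjOn u S) (hv : Set.InjOn v T) {α : ι → ℂ} {β : κ → ℂ}
    (hα : ∀ m ∈ S, ‖α m‖ ≤ 1) (hβ : ∀ n ∈ T, ‖β n‖ ≤ 1) :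
    ‖∑ m ∈ S, ∑ n ∈ T, α m * β n * ψ (u m * v n)‖ ≤ √(Fintype.card R * #S * #T) := by
  classical
  set F : R → ℝ := fun x => ‖∑ n ∈ T, β n * ψ (x * v n)‖
  have triangle : ‖∑ m ∈ S, ∑ n ∈ T, α m * β n * ψ (u m * v n)‖ ≤ ∑ m ∈ S, F (u m) := by
    refine (norm_sum_le _ _).trans (sum_le_sum fun m hm => ?_)
    simp_rw [mul_assoc, ← mul_sum, norm_mul]
    exact mul_le_of_le_one_left (norm_nonneg _) (hα m hm)
  have extend : ∑ m ∈ S, F (u m) ^ 2 ≤ ∑ x, F x ^ 2 := by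
    rw [← sum_image (f := fun x => F x ^ 2) hu]
    exact sum_le_univ_sum_of_nonneg fun x => sq_nonneg _
  have plancherel : ∑ x, F x ^ 2 ≤ Fintype.card R * #T := by
    rw [sum_norm_sq_sum_mul_apply_mul hψ hv]
    gcongr
    simpa using sum_le_sum fun n hn => pow_le_one₀ (norm_nonneg _) (hβ n hn)
  refine triangle.trans (le_sqrt_of_sq_le ?_)
  calc (∑ m ∈ S, F (u m)) ^ 2 ≤ #S * ∑ m ∈ S, F (u m) ^ 2 := sq_sum_le_card_mul_sum_sq
    _ ≤ #S * (Fintype.card R * #T) := by gcongr; exact extend.trans plancherel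
    _ = Fintype.card R * #S * #T := by ring

end AddChar

theorem norm_sum_le_card_mul_of_fiberwise {ι κ E : Type*} [SeminormedAddCommGroup E]
    [DecidableEq κ] {s : Finset ι} {t : Finset κ} {g : ι → κ} (hg : ∀ x ∈ s, g x ∈ t)
    (f : ι → E) {B : ℝ} (hB : ∀ k ∈ t, ‖∑ x ∈ s with g x = k, f x‖ ≤ B) :
    ‖∑ x ∈ s, f x‖ ≤ #t * B := by
  rw [← sum_fiberwise_of_maps_to hg]
  exact (norm_sum_le _ _).trans ((sum_le_sum hB).trans_eq (by simp))

theorem injOn_natCast_zmod_setOf_sub_div_eq (q m₀ k : ℕ) :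
    Set.InjOn (Nat.cast : ℕ → ZMod q) {m | m₀ ≤ m ∧ (m - m₀) / q = k} := by
  rintro m ⟨hm, hmk⟩ m' ⟨hm', hm'k⟩ h
  have hmod : (m - m₀) % q = (m' - m₀) % q := by
    rw [ZMod.natCast_eq_natCast_iff'] at h
    exact Nat.ModEq.add_right_cancel' m₀ (by rwa [Nat.sub_add_cancel hm, Nat.sub_add_cancel hm'])
  have : m - m₀ = m' - m₀ := by
    rw [← Nat.div_add_mod (m - m₀) q, ← Nat.div_add_mod (m' - m₀) q, hmk, hm'k, hmod]
  omega

theorem card_filter_Icc_sub_div_eq_le (q m₁ m₂ k : ℕ) [NeZero q] :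
    #{m ∈ Icc m₁ m₂ | (m - m₁) / q = k} ≤ min (m₂ - m₁ + 1) q := by
  refine le_min ((card_filter_le _ _).trans (by rw [Nat.card_Icc]; omega)) ?_
  simpa using card_le_card_of_injOn (t := univ) _ (fun _ _ => mem_univ _)
    ((injOn_natCast_zmod_setOf_sub_div_eq q m₁ k).mono fun m hm => by simp_all)

theorem norm_sum_Icc_sum_Icc_mul_apply_le {q : ℕ} [NeZero q] {ψ : AddChar (ZMod q) ℂ}
    (hψ : ψ.IsPrimitive) {c : ZMod q} (hc : IsUnit c) (m₁ m₂ n₁ n₂ : ℕ) {α β : ℕ → ℂ}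
    (hα : ∀ m, ‖α m‖ ≤ 1) (hβ : ∀ n, ‖β n‖ ≤ 1) :
    ‖∑ m ∈ Icc m₁ m₂, ∑ n ∈ Icc n₁ n₂, α m * β n * ψ (m * (c * n))‖ ≤
      ((m₂ - m₁) / q + 1 : ℕ) * ((n₂ - n₁) / q + 1 : ℕ) *
        √(q * (min (m₂ - m₁ + 1) q : ℕ) * (min (n₂ - n₁ + 1) q : ℕ)) := by
  have mapsTo_block (x₁ x₂ : ℕ) :
      ∀ x ∈ Icc x₁ x₂, (x - x₁) / q ∈ range ((x₂ - x₁) / q + 1) := by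
    intro x hx
    rw [mem_range, Nat.lt_succ_iff]
    exact Nat.div_le_div_right (Nat.sub_le_sub_right (mem_Icc.mp hx).2 x₁)
  have injOn_block (x₁ x₂ k : ℕ) :
      Set.InjOn (Nat.cast : ℕ → ZMod q) ↑({x ∈ Icc x₁ x₂ | (x - x₁) / q = k} : Finset ℕ) :=
    (injOn_natCast_zmod_setOf_sub_div_eq q x₁ k).mono fun x hx => by simp_all
  rw [mul_assoc, ← card_range ((m₂ - m₁) / q + 1), ← card_range ((n₂ - n₁) / q + 1)]
  refine norm_sum_le_card_mul_of_fiberwise (mapsTo_block m₁ m₂) _ fun k _ => ?_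
  rw [sum_comm]
  refine norm_sum_le_card_mul_of_fiberwise (mapsTo_block n₁ n₂) _ fun l _ => ?_
  rw [sum_comm]
  refine (AddChar.norm_sum_sum_mul_apply_mul_le hψ (injOn_block m₁ m₂ k)
    (hc.mul_right_injective.injOn.comp (injOn_block n₁ n₂ l) (Set.mapsTo_univ _ _))
    (fun m _ => hα m) (fun n _ => hβ n)).trans (sqrt_le_sqrt ?_)
  rw [ZMod.card]
  gcongr <;> exact card_filter_Icc_sub_div_eq_le q ..

theorem sq_floor_two_mul_sub_ceil_div_add_one_mul_le {M : ℝ} (hM : 1 ≤ M) {q : ℕ} (hq : 0 < q) :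
    ((((⌊2 * M⌋₊ - ⌈M⌉₊) / q + 1 : ℕ) : ℝ)) ^ 2 * (q * (min (⌊2 * M⌋₊ - ⌈M⌉₊ + 1) q : ℕ))
      ≤ 3 * M * (M + q) := by
  have hd : ((⌊2 * M⌋₊ - ⌈M⌉₊ : ℕ) : ℝ) ≤ M := by
    rcases le_total ⌈M⌉₊ ⌊2 * M⌋₊ with h | h
    · rw [Nat.cast_sub h]
      linarith [Nat.le_ceil M, Nat.floor_le (show 0 ≤ 2 * M by linarith)]
    · rw [Nat.sub_eq_zero_of_le h, Nat.cast_zero]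
      linarith
  set d := ⌊2 * M⌋₊ - ⌈M⌉₊
  set K : ℝ := ((d / q + 1 : ℕ) : ℝ)
  set X : ℝ := ((min (d + 1) q : ℕ) : ℝ)
  have hqR : (0 : ℝ) < q := by exact_mod_cast hq
  have hK : K * q ≤ M + q := by
    have : ((d / q * q : ℕ) : ℝ) ≤ d := by exact_mod_cast Nat.div_mul_le_self d q
    push_cast [K] at this ⊢
    linarith
  have hXM : X ≤ M + 1 := by
    have : X ≤ ((d + 1 : ℕ) : ℝ) := Nat.cast_le.mpr (min_le_left _ _)
    push_cast at this
    linarith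
  have hXq : X ≤ q := Nat.cast_le.mpr (min_le_right _ _)
  have hX : X * (M + q) ≤ 3 * M * q := by nlinarith
  refine le_of_mul_le_mul_left ?_ hqR
  calc (q : ℝ) * (K ^ 2 * (q * X)) = (K * q) ^ 2 * X := by ring
    _ ≤ (M + q) ^ 2 * X := by gcongr
    _ = (M + q) * (X * (M + q)) := by ring
    _ ≤ (M + q) * (3 * M * q) := by gcongr
    _ = q * (3 * M * (M + q)) := by ring

theorem mul_mul_sqrt_le_of_sq_mul_le {K L X Y M N q : ℝ} (hq : 0 < q) (hK : 0 ≤ K) (hL : 0 ≤ L)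
    (hX : 0 ≤ X) (hY : 0 ≤ Y) (hM : 0 ≤ M) (hN : 0 ≤ N)
    (hKX : K ^ 2 * (q * X) ≤ 3 * M * (M + q)) (hLY : L ^ 2 * (q * Y) ≤ 3 * N * (N + q)) :
    K * L * √(q * X * Y) ≤ 3 * √(M * N) * (√q)⁻¹ * √(M + q) * √(N + q) := by
  rw [← pow_le_pow_iff_left₀ (by positivity) (by positivity) two_ne_zero]
  simp only [mul_pow, inv_pow]
  rw [sq_sqrt (by positivity), sq_sqrt (by positivity), sq_sqrt hq.le, sq_sqrt (by positivity),
    sq_sqrt (by positivity)]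
  calc K ^ 2 * L ^ 2 * (q * X * Y) = K ^ 2 * (q * X) * (L ^ 2 * (q * Y)) * q⁻¹ := by
        field_simp
    _ ≤ 3 * M * (M + q) * (3 * N * (N + q)) * q⁻¹ := by gcongr
    _ = 3 ^ 2 * (M * N) * q⁻¹ * (M + q) * (N + q) := by ring

theorem eR_mul_div_eq_stdAddChar (q : ℕ) [NeZero q] (a : ℤ) (m n : ℕ) :
    eR ((a : ℝ) * m * n / q) = ZMod.stdAddChar ((m : ZMod q) * ((a : ZMod q) * (n : ZMod q))) := by
  have : (m : ZMod q) * ((a : ZMod q) * (n : ZMod q)) = ((m * (a * n) : ℤ) : ZMod q) := by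
    push_cast
    ring
  rw [this, ZMod.stdAddChar_coe, eR]
  congr 1
  push_cast
  ring

theorem bilinear_sum_bound :
    ∃ C : ℝ, 0 < C ∧ ∀ (q : ℕ), 1 ≤ q → ∀ (a : ℤ), IsCoprime a (q : ℤ) →
      ∀ (M N : ℝ), 1 ≤ M → 1 ≤ N → ∀ (α β : ℕ → ℂ),
        (∀ m, ‖α m‖ ≤ 1) → (∀ n, ‖β n‖ ≤ 1) →
        ‖∑ m ∈ Finset.Icc ⌈M⌉₊ ⌊2 * M⌋₊, ∑ n ∈ Finset.Icc ⌈N⌉₊ ⌊2 * N⌋₊,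
            α m * β n * eR ((a : ℝ) * m * n / q)‖ ≤
          C * Real.sqrt (M * N) * (Real.sqrt q)⁻¹ *
            Real.sqrt (M + q) * Real.sqrt (N + q) := by
  refine ⟨3, by norm_num, fun q hq a ha M N hM hN α β hα hβ => ?_⟩
  have : NeZero q := ⟨by omega⟩
  have ha_unit : IsUnit (a : ZMod q) := (ZMod.coe_int_isUnit_iff_isCoprime a q).mpr ha.symm
  simp_rw [eR_mul_div_eq_stdAddChar]
  refine (norm_sum_Icc_sum_Icc_mul_apply_le (ZMod.isPrimitive_stdAddChar q) ha_unit _ _ _ _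
    hα hβ).trans ?_
  exact mul_mul_sqrt_le_of_sq_mul_le (by positivity) (by positivity) (by positivity)
    (by positivity) (by positivity) (by linarith) (by linarith)
    (sq_floor_two_mul_sub_ceil_div_add_one_mul_le hM hq)
    (sq_floor_two_mul_sub_ceil_div_add_one_mul_le hN hq)
end

section
/- Let 2 ≤ y ≤ x and 1 ≤ w ≤ x be real numbers. Every y-smooth integer n with w < n ≤ x admits a unique factorization n = k·m where k and m are positive integers satisfying w < k ≤ w·P(k), P(k) ≤ y, m is y-smooth with m ≤ x/k, and the smallest prime factor p(m) of m satisfies p(m) ≥ P(k) (with the convention p(1) = +∞). -/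
open Finset

/-- Largest prime factor of `n`, with the convention `P 1 = 1` (and `P 0 = 1`). -/
def maxPrimeFactor (n : ℕ) : ℕ := if n ≤ 1 then 1 else n.primeFactors.sup id

lemma maxPrimeFactor_mem {k : ℕ} (hk : 2 ≤ k) : maxPrimeFactor k ∈ k.primeFactors := by
  have hne : k.primeFactors.Nonempty := Nat.nonempty_primeFactors.mpr hk
  obtain ⟨b, hb, he⟩ := Finset.exists_mem_eq_sup k.primeFactors hne id
  rw [maxPrimeFactor, if_neg (by omega), he]; exact hb

lemma maxPrimeFactor_prime {k : ℕ} (hk : 2 ≤ k) : (maxPrimeFactor k).Prime :=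
  Nat.prime_of_mem_primeFactors (maxPrimeFactor_mem hk)

lemma maxPrimeFactor_dvd {k : ℕ} (hk : 2 ≤ k) : maxPrimeFactor k ∣ k :=
  Nat.dvd_of_mem_primeFactors (maxPrimeFactor_mem hk)

lemma le_maxPrimeFactor {k p : ℕ} (hk : k ≠ 0) (hp : p.Prime) (hd : p ∣ k) :
    p ≤ maxPrimeFactor k := by
  have hk2 : 2 ≤ k := by
    obtain ⟨c, rfl⟩ := hd
    have hc : 1 ≤ c := Nat.pos_of_ne_zero (by rintro rfl; simp at hk)
    calc 2 ≤ p := hp.two_le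
    _ = p * 1 := (mul_one p).symm
    _ ≤ p * c := Nat.mul_le_mul_left p hc
  rw [maxPrimeFactor, if_neg (by omega)]
  exact Finset.le_sup (f := id) (Nat.mem_primeFactors.mpr ⟨hp, hd, hk⟩)

lemma one_le_maxPrimeFactor (k : ℕ) : 1 ≤ maxPrimeFactor k := by
  rcases Nat.lt_or_ge k 2 with h | h
  · rw [maxPrimeFactor, if_pos (by omega)]
  · exact (maxPrimeFactor_prime h).one_lt.le

lemma maxPrimeFactor_le_of_dvd {k n : ℕ} (hn : n ≠ 0) (hd : k ∣ n) :
    maxPrimeFactor k ≤ maxPrimeFactor n := by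
  rcases Nat.lt_or_ge k 2 with h | h
  · rw [maxPrimeFactor, if_pos (by omega)]; exact one_le_maxPrimeFactor n
  · exact le_maxPrimeFactor hn (maxPrimeFactor_prime h) ((maxPrimeFactor_dvd h).trans hd)

lemma pf_append {k m : ℕ} (hk : k ≠ 0) (hm : m ≠ 0)
    (h : m = 1 ∨ maxPrimeFactor k ≤ m.minFac) :
    (k * m).primeFactorsList = k.primeFactorsList ++ m.primeFactorsList := by
  refine List.Perm.eq_of_pairwise' (r := (· ≤ ·)) (Nat.primeFactorsList_sorted _).pairwise ?_
    (Nat.perm_primeFactorsList_mul hk hm)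
  rw [List.pairwise_append]
  refine ⟨(Nat.primeFactorsList_sorted _).pairwise, (Nat.primeFactorsList_sorted _).pairwise,
    fun a ha b hb => ?_⟩
  rcases h with rfl | h
  · simp [Nat.primeFactorsList_one] at hb
  · have hap : a.Prime := Nat.prime_of_mem_primeFactorsList ha
    have had : a ∣ k := Nat.dvd_of_mem_primeFactorsList ha
    have hbp : b.Prime := Nat.prime_of_mem_primeFactorsList hb
    have hbd : b ∣ m := Nat.dvd_of_mem_primeFactorsList hb
    calc a ≤ maxPrimeFactor k := le_maxPrimeFactor hk hap had
    _ ≤ m.minFac := h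
    _ ≤ b := Nat.minFac_le_of_dvd hbp.two_le hbd

lemma exists_fact (w : ℝ) (hw1 : 1 ≤ w) :
    ∀ n : ℕ, w < n → ∃ k m : ℕ, n = k * m ∧ w < (k : ℝ) ∧
      (k : ℝ) ≤ w * maxPrimeFactor k ∧ (m = 1 ∨ maxPrimeFactor k ≤ m.minFac) := by
  intro n
  induction n using Nat.strong_induction_on with
  | _ n ih =>
    intro hn
    have hn2 : 2 ≤ n := by
      by_contra hc
      interval_cases n <;> push_cast at hn <;> linarith
    have hQp := maxPrimeFactor_prime hn2
    set Q := maxPrimeFactor n with hQ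
    obtain ⟨n', hn'⟩ : ∃ n', n = n' * Q := by
      obtain ⟨c, hc⟩ := maxPrimeFactor_dvd hn2
      exact ⟨c, by rw [hc, mul_comm]⟩
    have hn'pos : 0 < n' := by
      rcases Nat.eq_zero_or_pos n' with rfl | h; · simp at hn'; omega
      · exact h
    by_cases hcase : w < (n' : ℝ)
    · have hlt : n' < n := by
        rw [hn']
        have h2Q := hQp.two_le
        nlinarith [hn'pos]
      obtain ⟨k, m', rfl, hk1, hk2, hm'⟩ := ih n' hlt hcase
      have hkpos : 0 < k := by
        rcases Nat.eq_zero_or_pos k with rfl | h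
        · exfalso; push_cast at hk1; linarith
        · exact h
      have hkne : k ≠ 0 := hkpos.ne'
      have hPkQ : maxPrimeFactor k ≤ Q := by
        rw [hQ]; exact maxPrimeFactor_le_of_dvd (by omega) ⟨m' * Q, by rw [hn', mul_assoc]⟩
      refine ⟨k, m' * Q, by rw [hn', mul_assoc], hk1, hk2, Or.inr ?_⟩
      have hm'pos : 0 < m' := by
        rcases Nat.eq_zero_or_pos m' with rfl | h; · simp at hn'pos
        · exact h
      have h2 : 2 ≤ m' * Q := by
        calc 2 ≤ Q := hQp.two_le
        _ = 1 * Q := (one_mul _).symm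
        _ ≤ m' * Q := Nat.mul_le_mul_right Q hm'pos
      have hqp : (m' * Q).minFac.Prime := Nat.minFac_prime (by omega)
      rcases hqp.prime.dvd_mul.mp ((m' * Q).minFac_dvd) with hd | hd
      · rcases eq_or_ne m' 1 with rfl | hne
        · have := Nat.eq_one_of_dvd_one hd
          exact absurd (this ▸ hqp) Nat.not_prime_one
        · have : m'.minFac ≤ (m' * Q).minFac := Nat.minFac_le_of_dvd hqp.two_le hd
          rcases hm' with rfl | hm'; · omega
          · omega
      · have : (m' * Q).minFac = Q := (Nat.prime_dvd_prime_iff_eq hqp hQp).mp hd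
        omega
    · refine ⟨n, 1, (mul_one n).symm, hn, ?_, Or.inl rfl⟩
      have h1 : (n' : ℝ) ≤ w := not_lt.mp hcase
      have h2 : (0 : ℝ) ≤ Q := by positivity
      have h3 : maxPrimeFactor n = Q := hQ.symm
      rw [h3]
      calc (n : ℝ) = (n' : ℝ) * Q := by rw [hn']; push_cast; ring
      _ ≤ w * Q := by nlinarith

lemma no_lt (w : ℝ) (hw1 : 1 ≤ w) (n k1 m1 k2 m2 : ℕ)
    (hk1pos : 0 < k1) (hm1pos : 0 < m1) (hk2pos : 0 < k2) (hm2pos : 0 < m2)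
    (h1 : n = k1 * m1) (h2 : n = k2 * m2)
    (hwk1 : w < (k1 : ℝ))
    (hk2a : (k2 : ℝ) ≤ w * maxPrimeFactor k2)
    (hs1 : m1 = 1 ∨ maxPrimeFactor k1 ≤ m1.minFac)
    (hs2 : m2 = 1 ∨ maxPrimeFactor k2 ≤ m2.minFac)
    (hlen : k1.primeFactorsList.length < k2.primeFactorsList.length) : False := by
  have hl1 : n.primeFactorsList = k1.primeFactorsList ++ m1.primeFactorsList := by
    rw [h1]; exact pf_append hk1pos.ne' hm1pos.ne' hs1
  have hl2 : n.primeFactorsList = k2.primeFactorsList ++ m2.primeFactorsList := by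
    rw [h2]; exact pf_append hk2pos.ne' hm2pos.ne' hs2
  set A1 := k1.primeFactorsList with hA1
  set A2 := k2.primeFactorsList with hA2
  have hA2ne : A2 ≠ [] := by
    intro h; rw [h] at hlen; simp at hlen
  set q := A2.getLast hA2ne with hq
  have hsplit : A2.dropLast ++ [q] = A2 := List.dropLast_append_getLast hA2ne
  have hqmem : q ∈ A2 := List.getLast_mem hA2ne
  have hqprime : q.Prime := Nat.prime_of_mem_primeFactorsList hqmem
  have hqdvd : q ∣ k2 := Nat.dvd_of_mem_primeFactorsList hqmem
  -- q = maxPrimeFactor k2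
  have hqP : maxPrimeFactor k2 = q := by
    refine le_antisymm ?_ (le_maxPrimeFactor hk2pos.ne' hqprime hqdvd)
    have hk22 : 2 ≤ k2 := by
      rcases Nat.lt_or_ge k2 2 with h | h
      · interval_cases k2 <;> simp_all
      · exact h
    have hPmem : maxPrimeFactor k2 ∈ A2 := by
      rw [hA2, Nat.mem_primeFactorsList hk2pos.ne']
      exact ⟨maxPrimeFactor_prime hk22, maxPrimeFactor_dvd hk22⟩
    have hsorted : A2.Pairwise (· ≤ ·) := (Nat.primeFactorsList_sorted _).pairwise
    rw [← hsplit] at hPmem hsorted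
    rw [List.pairwise_append] at hsorted
    rcases List.mem_append.mp hPmem with h | h
    · exact hsorted.2.2 _ h _ (by simp)
    · simp at h; omega
  -- k2 = d * q
  have hk2prod : A2.prod = k2 := Nat.prod_primeFactorsList hk2pos.ne'
  have hdq : A2.dropLast.prod * q = k2 := by
    rw [← hk2prod, ← hsplit]; simp
  -- k1's list is a prefix of A2.dropLast
  have hpre1 : A1 <+: n.primeFactorsList := hl1 ▸ List.prefix_append _ _
  have hpre2 : A2.dropLast <+: n.primeFactorsList := by
    rw [hl2]
    exact (List.dropLast_prefix A2).trans (List.prefix_append _ _)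
  have hlenle : A1.length ≤ A2.dropLast.length := by
    rw [List.length_dropLast]; omega
  have hpre : A1 <+: A2.dropLast := List.prefix_of_prefix_length_le hpre1 hpre2 hlenle
  obtain ⟨t, ht⟩ := hpre
  have hk1dvd : k1 ∣ A2.dropLast.prod := by
    have hprod : A1.prod = k1 := Nat.prod_primeFactorsList hk1pos.ne'
    rw [← ht, List.prod_append, hprod]
    exact dvd_mul_right _ _
  have hdpos : 0 < A2.dropLast.prod := by
    apply List.prod_pos
    intro a ha
    exact (Nat.prime_of_mem_primeFactorsList (List.mem_of_mem_dropLast ha)).pos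
  have hk1le : k1 ≤ A2.dropLast.prod := Nat.le_of_dvd hdpos hk1dvd
  -- contradiction
  have hq2 : (2 : ℝ) ≤ q := by exact_mod_cast hqprime.two_le
  have hwd : w < (A2.dropLast.prod : ℝ) := lt_of_lt_of_le hwk1 (by exact_mod_cast hk1le)
  rw [hqP] at hk2a
  have : (k2 : ℝ) = (A2.dropLast.prod : ℝ) * q := by exact_mod_cast hdq.symm
  nlinarith

theorem smooth_unique_factorization (x y w : ℝ) (hy : 2 ≤ y) (hyx : y ≤ x)
    (hw1 : 1 ≤ w) (hwx : w ≤ x) (n : ℕ) (hn1 : w < (n : ℝ)) (hn2 : (n : ℝ) ≤ x)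
    (hsmooth : ∀ p : ℕ, p.Prime → p ∣ n → (p : ℝ) ≤ y) :
    ∃! km : ℕ × ℕ, 0 < km.1 ∧ 0 < km.2 ∧ n = km.1 * km.2 ∧
      w < (km.1 : ℝ) ∧ (km.1 : ℝ) ≤ w * maxPrimeFactor km.1 ∧
      (maxPrimeFactor km.1 : ℝ) ≤ y ∧
      (∀ p : ℕ, p.Prime → p ∣ km.2 → (p : ℝ) ≤ y) ∧ (km.2 : ℝ) ≤ x / km.1 ∧
      (km.2 = 1 ∨ maxPrimeFactor km.1 ≤ Nat.minFac km.2) := by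
  have hnpos : 0 < n := by
    rcases Nat.eq_zero_or_pos n with rfl | h
    · exfalso; push_cast at hn1; linarith
    · exact h
  obtain ⟨k, m, hkm, hwk, hkw, hsm⟩ := exists_fact w hw1 n hn1
  have hkpos : 0 < k := by
    rcases Nat.eq_zero_or_pos k with rfl | h
    · exfalso; push_cast at hwk; linarith
    · exact h
  have hmpos : 0 < m := by
    rcases Nat.eq_zero_or_pos m with rfl | h
    · simp [hkm] at hnpos
    · exact h
  -- auxiliary facts valid for any pair satisfying the core conditions
  have hPy : ∀ k' : ℕ, 0 < k' → k' ∣ n → (maxPrimeFactor k' : ℝ) ≤ y := by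
    intro k' hk' hd
    rcases Nat.lt_or_ge k' 2 with h | h
    · interval_cases k'
      rw [maxPrimeFactor, if_pos le_rfl]; push_cast; linarith
    · exact hsmooth _ (maxPrimeFactor_prime h) ((maxPrimeFactor_dvd h).trans hd)
  refine ⟨⟨k, m⟩, ⟨hkpos, hmpos, hkm, hwk, hkw,
    hPy k hkpos ⟨m, hkm⟩, ?_, ?_, hsm⟩, ?_⟩
  · intro p hp hd
    exact hsmooth p hp (hd.trans ⟨k, by rw [hkm, mul_comm]⟩)
  · rw [le_div_iff₀ (by exact_mod_cast hkpos)]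
    calc (m : ℝ) * k = (n : ℝ) := by rw [hkm]; push_cast; ring
    _ ≤ x := hn2
  · rintro ⟨k2, m2⟩ ⟨hk2pos, hm2pos, hkm2, hwk2, hkw2, _, _, _, hsm2⟩
    simp only at *
    -- lengths must be equal
    have hlen : k2.primeFactorsList.length = k.primeFactorsList.length := by
      rcases lt_trichotomy k2.primeFactorsList.length k.primeFactorsList.length with h | h | h
      · exact absurd h (fun h => no_lt w hw1 n k2 m2 k m
          hk2pos hm2pos hkpos hmpos hkm2 hkm hwk2 hkw hsm2 hsm h)
      · exact h
      · exact absurd h (fun h => no_lt w hw1 n k m k2 m2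
          hkpos hmpos hk2pos hm2pos hkm hkm2 hwk hkw2 hsm hsm2 h)
    -- both prime factor lists are prefixes of n's, with the same length, so equal
    have hl1 : n.primeFactorsList = k.primeFactorsList ++ m.primeFactorsList := by
      rw [hkm]; exact pf_append hkpos.ne' hmpos.ne' hsm
    have hl2 : n.primeFactorsList = k2.primeFactorsList ++ m2.primeFactorsList := by
      rw [hkm2]; exact pf_append hk2pos.ne' hm2pos.ne' hsm2
    have hpre1 : k.primeFactorsList <+: n.primeFactorsList := hl1 ▸ List.prefix_append _ _
    have hpre2 : k2.primeFactorsList <+: n.primeFactorsList := hl2 ▸ List.prefix_append _ _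
    have hpre : k2.primeFactorsList <+: k.primeFactorsList :=
      List.prefix_of_prefix_length_le hpre2 hpre1 (le_of_eq hlen)
    have heq : k2.primeFactorsList = k.primeFactorsList := List.IsPrefix.eq_of_length hpre hlen
    have hk2k : k2 = k := by
      rw [← Nat.prod_primeFactorsList hk2pos.ne', ← Nat.prod_primeFactorsList hkpos.ne', heq]
    have hm2m : m2 = m := by
      subst hk2k
      exact Nat.eq_of_mul_eq_mul_left hk2pos (by rw [← hkm2, ← hkm])
    simp [hk2k, hm2m]
end

section
/- Define η : [0,1] → ℝ by η(µ) = min{µ/2, 1/2 − β/4 − µ/2} for 0 ≤ µ ≤ 1/2 and η(µ) = min{µ/2 − β/4, 1/2 − µ/2} for 1/2 < µ ≤ 1, where 0 ≤ β ≤ 1 is a fixed parameter. Let 0 < α ≤ 1 and define κ(ω) = min_{ω ≤ µ ≤ ω+α} η(µ). Then the choice ω* = 1/2 − β/4 − α/2 if α < β/2, ω* = (1−β)/2 if β/2 ≤ α < β, and ω* = (1−α)/2 if β ≤ α ≤ 1, yields κ(ω*) = ω*/2, and this value of κ is maximal: κ(ω) ≤ ω*/2 for all admissible ω. -/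
open Set

theorem two_peak_optimization (α β : ℝ) (hβ0 : 0 ≤ β) (hβ1 : β ≤ 1)
    (hα0 : 0 < α) (hα1 : α ≤ 1) :
    let η : ℝ → ℝ := fun μ =>
      if μ ≤ 1 / 2 then min (μ / 2) (1 / 2 - β / 4 - μ / 2)
      else min (μ / 2 - β / 4) (1 / 2 - μ / 2)
    let κ : ℝ → ℝ := fun ω => sInf (η '' Set.Icc ω (ω + α))
    let ωstar : ℝ :=
      if α < β / 2 then 1 / 2 - β / 4 - α / 2
      else if α < β then (1 - β) / 2
      else (1 - α) / 2
    κ ωstar = ωstar / 2 ∧ ∀ ω : ℝ, 0 ≤ ω → ω + α ≤ 1 → κ ω ≤ ωstar / 2 := by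
  intro η κ ωstar
  have hη : ∀ μ : ℝ, η μ = if μ ≤ 1 / 2 then min (μ / 2) (1 / 2 - β / 4 - μ / 2)
      else min (μ / 2 - β / 4) (1 / 2 - μ / 2) := fun μ => rfl
  have hκ : ∀ ω : ℝ, κ ω = sInf (η '' Set.Icc ω (ω + α)) := fun ω => rfl
  have hbdd : ∀ ω : ℝ, BddBelow (η '' Set.Icc ω (ω + α)) := by
    intro ω
    refine ⟨min (min (ω / 2) (1 / 2 - β / 4 - (ω + α) / 2))
      (min (ω / 2 - β / 4) (1 / 2 - (ω + α) / 2)), ?_⟩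
    rintro y ⟨μ, ⟨hμ1, hμ2⟩, rfl⟩
    rw [hη]
    split_ifs with h
    · refine le_min ?_ ?_
      · exact le_trans (le_trans (min_le_left _ _) (min_le_left _ _)) (by linarith)
      · exact le_trans (le_trans (min_le_left _ _) (min_le_right _ _)) (by linarith)
    · refine le_min ?_ ?_
      · exact le_trans (le_trans (min_le_right _ _) (min_le_left _ _)) (by linarith)
      · exact le_trans (le_trans (min_le_right _ _) (min_le_right _ _)) (by linarith)
  have key : ∀ ω μ c : ℝ, μ ∈ Set.Icc ω (ω + α) → η μ ≤ c → κ ω ≤ c := by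
    intro ω μ c hμ hc
    exact le_trans (csInf_le (hbdd ω) ⟨μ, hμ, rfl⟩) hc
  have hlow : ∀ ω : ℝ, (∀ μ : ℝ, ω ≤ μ → μ ≤ ω + α → ω / 2 ≤ η μ) → ω / 2 ≤ κ ω := by
    intro ω h
    rw [hκ]
    refine le_csInf ⟨η ω, ⟨ω, Set.mem_Icc.mpr ⟨le_refl _, by linarith⟩, rfl⟩⟩ ?_
    rintro y ⟨μ, ⟨hμ1, hμ2⟩, rfl⟩
    exact h μ hμ1 hμ2
  have hωs : ωstar = if α < β / 2 then 1 / 2 - β / 4 - α / 2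
      else if α < β then (1 - β) / 2 else (1 - α) / 2 := rfl
  by_cases hc1 : α < β / 2
  · -- Case 1: ωstar = 1/2 - β/4 - α/2
    rw [hωs, if_pos hc1]
    set v : ℝ := 1 / 2 - β / 4 - α / 2 with hv
    have hlb : v / 2 ≤ κ v := by
      apply hlow
      intro μ hμ1 hμ2
      rw [hη]
      split_ifs with h
      · exact le_min (by rw [hv] at hμ1 ⊢; linarith) (by rw [hv] at hμ2 ⊢; linarith)
      · exact le_min (by rw [hv] at hμ2 ⊢; linarith) (by rw [hv] at hμ2 ⊢; linarith)
    have hub : κ v ≤ v / 2 := by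
      apply key v v
      · exact Set.mem_Icc.mpr ⟨le_refl _, by linarith⟩
      · rw [hη, if_pos (by rw [hv]; linarith)]
        exact min_le_left _ _
    refine ⟨le_antisymm hub hlb, ?_⟩
    intro ω hω hωα
    by_cases h1 : ω ≤ v
    · refine key ω ω _ (Set.mem_Icc.mpr ⟨le_refl _, by linarith⟩) ?_
      rw [hη, if_pos (by rw [hv] at h1; linarith)]
      exact le_trans (min_le_left _ _) (by rw [hv] at h1 ⊢; linarith)
    · rw [hv] at h1
      push_neg at h1
      by_cases h2 : ω + α ≤ 1 / 2
      · refine key ω (ω + α) _ (Set.mem_Icc.mpr ⟨by linarith, le_refl _⟩) ?_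
        rw [hη, if_pos h2]
        exact le_trans (min_le_right _ _) (by rw [hv]; linarith)
      · push_neg at h2
        by_cases h3 : ω ≤ 1 / 2
        · refine key ω (1 / 2) _ (Set.mem_Icc.mpr ⟨h3, by linarith⟩) ?_
          rw [hη, if_pos (le_refl _)]
          exact le_trans (min_le_right _ _) (by rw [hv]; linarith)
        · push_neg at h3
          by_cases h4 : ω < 1 / 2 + β / 4 - α / 2
          · refine key ω ω _ (Set.mem_Icc.mpr ⟨le_refl _, by linarith⟩) ?_
            rw [hη, if_neg (by linarith)]
            exact le_trans (min_le_left _ _) (by rw [hv]; linarith)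
          · push_neg at h4
            refine key ω (ω + α) _ (Set.mem_Icc.mpr ⟨by linarith, le_refl _⟩) ?_
            rw [hη, if_neg (by push_neg; linarith)]
            exact le_trans (min_le_right _ _) (by rw [hv]; linarith)
  · push_neg at hc1
    by_cases hc2 : α < β
    · -- Case 2: ωstar = (1 - β)/2
      rw [hωs, if_neg (by push_neg; linarith), if_pos hc2]
      set v : ℝ := (1 - β) / 2 with hv
      have hlb : v / 2 ≤ κ v := by
        apply hlow
        intro μ hμ1 hμ2
        rw [hη]
        split_ifs with h
        · exact le_min (by rw [hv] at hμ1 ⊢; linarith) (by rw [hv]; linarith)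
        · push_neg at h
          exact le_min (by rw [hv]; linarith) (by rw [hv] at hμ2 ⊢; linarith)
      have hub : κ v ≤ v / 2 := by
        apply key v v
        · exact Set.mem_Icc.mpr ⟨le_refl _, by linarith⟩
        · rw [hη, if_pos (by rw [hv]; linarith)]
          exact min_le_left _ _
      refine ⟨le_antisymm hub hlb, ?_⟩
      intro ω hω hωα
      by_cases h1 : ω ≤ v
      · refine key ω ω _ (Set.mem_Icc.mpr ⟨le_refl _, by linarith⟩) ?_
        rw [hη, if_pos (by rw [hv] at h1; linarith)]
        exact le_trans (min_le_left _ _) (by rw [hv] at h1 ⊢; linarith)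
      · rw [hv] at h1
        push_neg at h1
        by_cases h2 : ω + α ≤ 1 / 2
        · refine key ω (ω + α) _ (Set.mem_Icc.mpr ⟨by linarith, le_refl _⟩) ?_
          rw [hη, if_pos h2]
          exact le_trans (min_le_right _ _) (by rw [hv]; linarith)
        · push_neg at h2
          by_cases h3 : ω ≤ 1 / 2
          · refine key ω (1 / 2) _ (Set.mem_Icc.mpr ⟨h3, by linarith⟩) ?_
            rw [hη, if_pos (le_refl _)]
            exact le_trans (min_le_right _ _) (by rw [hv]; linarith)
          · push_neg at h3
            refine key ω (ω + α) _ (Set.mem_Icc.mpr ⟨by linarith, le_refl _⟩) ?_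
            rw [hη, if_neg (by push_neg; linarith)]
            exact le_trans (min_le_right _ _) (by rw [hv]; linarith)
    · -- Case 3: ωstar = (1 - α)/2
      push_neg at hc2
      rw [hωs, if_neg (by push_neg; linarith), if_neg (by push_neg; linarith)]
      set v : ℝ := (1 - α) / 2 with hv
      have hlb : v / 2 ≤ κ v := by
        apply hlow
        intro μ hμ1 hμ2
        rw [hη]
        split_ifs with h
        · exact le_min (by rw [hv] at hμ1 ⊢; linarith) (by rw [hv]; linarith)
        · push_neg at h
          exact le_min (by rw [hv]; linarith) (by rw [hv] at hμ2 ⊢; linarith)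
      have hub : κ v ≤ v / 2 := by
        apply key v v
        · exact Set.mem_Icc.mpr ⟨le_refl _, by linarith⟩
        · rw [hη, if_pos (by rw [hv]; linarith)]
          exact min_le_left _ _
      refine ⟨le_antisymm hub hlb, ?_⟩
      intro ω hω hωα
      by_cases h1 : ω ≤ v
      · refine key ω ω _ (Set.mem_Icc.mpr ⟨le_refl _, by linarith⟩) ?_
        rw [hη, if_pos (by rw [hv] at h1; linarith)]
        exact le_trans (min_le_left _ _) (by rw [hv] at h1 ⊢; linarith)
      · rw [hv] at h1
        push_neg at h1
        refine key ω (ω + α) _ (Set.mem_Icc.mpr ⟨by linarith, le_refl _⟩) ?_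
        rw [hη, if_neg (by push_neg; linarith)]
        exact le_trans (min_le_right _ _) (by rw [hv]; linarith)
end
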